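/- arXiv:0712.2193 — 2 statements merged into one kernel-verified Lean document; each statement's English description precedes it below -/
import Mathlib

section
/- (Lemma 8.1: Lipschitz continuity of the holonomy of a harmonic straightening.) For every pair of points z₀, z₁ ∈ 𝔻 there exists a constant C > 0 with the following property. Let Φ : 𝔻 × [0,1] → [0,1] be any function such that: (i) for each t ∈ [0,1], the map z ↦ Φ(z,t) is harmonic on 𝔻; (ii) for all s ≤ t in [0,1] and all z ∈ 𝔻, Φ(z,s) ≤ Φ(z,t); and (iii) Φ(z₀,t) = t for all t ∈ [0,1]. Then the holonomy function t ↦ Φ(z₁,t) is Lipschitz with constant C: |Φ(z₁,t) − Φ(z₁,s)| ≤ C|t − s| for all s,t ∈ [0,1]. -/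
open Metric Set Filter

noncomputable section

/-- The open unit disc in `ℂ`. -/
def unitDisc : Set ℂ := Metric.ball 0 1

/-- A function `f : ℂ → ℝ` is harmonic on a set `U ⊆ ℂ` if, locally on `U`, it is
the real part of a holomorphic function (for open `U` this is equivalent to being
`C²` with vanishing Laplacian). -/
def HarmonicOnSet (f : ℂ → ℝ) (U : Set ℂ) : Prop :=
  ∀ z ∈ U, ∃ r > 0, Metric.ball z r ⊆ U ∧
    ∃ g : ℂ → ℂ, DifferentiableOn ℂ g (Metric.ball z r) ∧
      ∀ w ∈ Metric.ball z r, f w = (g w).re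

/-!
For `s ≤ t` the difference `Φ(·, t) - Φ(·, s)` is a nonnegative harmonic function on `𝔻`,
so by Harnack's inequality its value at `z₁` is at most `C` times its value at `z₀`,
which is `t - s`.
Harnack's inequality on a disc comes from the Poisson formula: on the circle of radius `R` about
`c`, the Poisson kernel at `w` lies between `(R - r) / (R + r)` and `(R + r) / (R - r)`,
`r = ‖w - c‖`, and the mean value of a harmonic function over that circle is its value at `c`.
-/

open InnerProductSpace Complex Real Topology

theorem HarmonicOnSet.harmonicOnNhd {f : ℂ → ℝ} {U : Set ℂ} (hf : HarmonicOnSet f U) :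
    HarmonicOnNhd f U := by
  intro z hz
  obtain ⟨r, hr, -, g, hg, hfg⟩ := hf z hz
  have hfg_nhds : f =ᶠ[𝓝 z] fun w => (g w).re :=
    eventually_of_mem (ball_mem_nhds z hr) hfg
  exact (harmonicAt_congr_nhds hfg_nhds).2 (hg.analyticAt (ball_mem_nhds z hr)).harmonicAt_re

def harnackFactor (R r : ℝ) : ℝ := (R + r) / (R - r)

lemma harnackFactor_pos {R r : ℝ} (hr : 0 ≤ r) (hrR : r < R) : 0 < harnackFactor R r :=
  div_pos (by linarith) (by linarith)

variable {f : ℂ → ℝ} {c w z : ℂ} {R : ℝ}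

lemma poissonKernel_le_harnackFactor (hz : z ∈ sphere c R) (hw : w ∈ ball c R) :
    poissonKernel c w z ≤ harnackFactor R ‖w - c‖ := by
  simpa [harnackFactor, poissonKernel_eq_re_herglotzRieszKernel, herglotzRieszKernel] using
    re_herglotzRieszKernel_le hz hw

lemma inv_harnackFactor_le_poissonKernel (hz : z ∈ sphere c R) (hw : w ∈ ball c R) :
    (harnackFactor R ‖w - c‖)⁻¹ ≤ poissonKernel c w z := by
  simpa [harnackFactor, poissonKernel_eq_re_herglotzRieszKernel, herglotzRieszKernel] using
    le_re_herglotzRieszKernel hz hw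

namespace InnerProductSpace.HarmonicOnNhd

lemma circleIntegrable_poissonKernel_smul (hf : HarmonicOnNhd f (closedBall c R))
    (hw : w ∈ ball c R) : CircleIntegrable (poissonKernel c w • f) c R := by
  have hR : 0 ≤ R := (pos_of_mem_ball hw).le
  refine ContinuousOn.circleIntegrable hR (ContinuousOn.smul ?_ ?_)
  · rw [poissonKernel_eq_re_herglotzRieszKernel]
    exact continuous_re.comp_continuousOn
      (by simpa [abs_of_nonneg hR] using continuousOn_herglotzRieszKernel_sphere hw)
  · exact hf.continuousOn.mono sphere_subset_closedBall

lemma circleIntegrable (hf : HarmonicOnNhd f (closedBall c R)) (hR : 0 ≤ R) :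
    CircleIntegrable f c R :=
  (hf.continuousOn.mono sphere_subset_closedBall).circleIntegrable hR

theorem apply_le_harnackFactor_mul (hf : HarmonicOnNhd f (closedBall c R))
    (hpos : ∀ z ∈ sphere c R, 0 ≤ f z) (hw : w ∈ ball c R) :
    f w ≤ harnackFactor R ‖w - c‖ * f c := by
  have hR : |R| = R := abs_of_pos (pos_of_mem_ball hw)
  calc f w = circleAverage (poissonKernel c w • f) c R :=
        (hf.circleAverage_poissonKernel_smul hw).symm
    _ ≤ circleAverage (harnackFactor R ‖w - c‖ • f) c R := by
        refine circleAverage_mono (circleIntegrable_poissonKernel_smul hf hw)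
          (hf.circleIntegrable (pos_of_mem_ball hw).le).const_smul fun z hz => ?_
        rw [hR] at hz
        exact mul_le_mul_of_nonneg_right (poissonKernel_le_harnackFactor hz hw) (hpos z hz)
    _ = harnackFactor R ‖w - c‖ * f c := by
        rw [circleAverage_smul, smul_eq_mul, circleAverage_eq (by rwa [hR])]

theorem apply_center_le_harnackFactor_mul (hf : HarmonicOnNhd f (closedBall c R))
    (hpos : ∀ z ∈ sphere c R, 0 ≤ f z) (hw : w ∈ ball c R) :
    f c ≤ harnackFactor R ‖w - c‖ * f w := by
  have hR : |R| = R := abs_of_pos (pos_of_mem_ball hw)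
  refine (inv_mul_le_iff₀ (harnackFactor_pos (norm_nonneg _) (mem_ball_iff_norm.1 hw))).1 ?_
  calc (harnackFactor R ‖w - c‖)⁻¹ * f c
        = circleAverage ((harnackFactor R ‖w - c‖)⁻¹ • f) c R := by
        rw [circleAverage_smul, smul_eq_mul, circleAverage_eq (by rwa [hR])]
    _ ≤ circleAverage (poissonKernel c w • f) c R := by
        refine circleAverage_mono (hf.circleIntegrable (pos_of_mem_ball hw).le).const_smul
          (circleIntegrable_poissonKernel_smul hf hw) fun z hz => ?_
        rw [hR] at hz
        exact mul_le_mul_of_nonneg_right (inv_harnackFactor_le_poissonKernel hz hw) (hpos z hz)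
    _ = f w := hf.circleAverage_poissonKernel_smul hw

end InnerProductSpace.HarmonicOnNhd

theorem exists_harnack_constant {z₀ z₁ : ℂ} (h₀ : z₀ ∈ ball c R) (h₁ : z₁ ∈ ball c R) :
    ∃ C > 0, ∀ f : ℂ → ℝ, HarmonicOnNhd f (ball c R) → (∀ z ∈ ball c R, 0 ≤ f z) →
      f z₁ ≤ C * f z₀ := by
  obtain ⟨ρ, hρ, hρR⟩ := exists_between (max_lt (mem_ball.1 h₀) (mem_ball.1 h₁))
  have h₀ρ : z₀ ∈ ball c ρ := mem_ball.2 ((le_max_left _ _).trans_lt hρ)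
  have h₁ρ : z₁ ∈ ball c ρ := mem_ball.2 ((le_max_right _ _).trans_lt hρ)
  set K₀ := harnackFactor ρ ‖z₀ - c‖
  set K₁ := harnackFactor ρ ‖z₁ - c‖
  have hK₀ : 0 < K₀ := harnackFactor_pos (norm_nonneg _) (mem_ball_iff_norm.1 h₀ρ)
  have hK₁ : 0 < K₁ := harnackFactor_pos (norm_nonneg _) (mem_ball_iff_norm.1 h₁ρ)
  refine ⟨K₁ * K₀, mul_pos hK₁ hK₀, fun f hf hpos => ?_⟩
  have hsub : closedBall c ρ ⊆ ball c R := closedBall_subset_ball hρR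
  have hfρ : HarmonicOnNhd f (closedBall c ρ) := hf.mono hsub
  have hposρ : ∀ z ∈ sphere c ρ, 0 ≤ f z :=
    fun z hz => hpos z (hsub (sphere_subset_closedBall hz))
  calc f z₁ ≤ K₁ * f c := hfρ.apply_le_harnackFactor_mul hposρ h₁ρ
    _ ≤ K₁ * (K₀ * f z₀) := by
        gcongr
        exact hfρ.apply_center_le_harnackFactor_mul hposρ h₀ρ
    _ = K₁ * K₀ * f z₀ := by ring

/-- **Lemma 8.1 (Lipschitz holonomy of a harmonic straightening).** For any `z₀, z₁ ∈ 𝔻`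
there is a constant `C > 0` (a Harnack constant) such that for every monotone family
`Φ : 𝔻 × [0,1] → [0,1]` of harmonic functions normalized by `Φ(z₀,t) = t`, the holonomy
`t ↦ Φ(z₁,t)` is `C`-Lipschitz. -/
theorem harmonic_holonomy_lipschitz :
    ∀ z₀ ∈ unitDisc, ∀ z₁ ∈ unitDisc, ∃ C : ℝ, 0 < C ∧
      ∀ Φ : ℂ → ℝ → ℝ,
        (∀ t ∈ Icc (0 : ℝ) 1, ∀ z ∈ unitDisc, Φ z t ∈ Icc (0 : ℝ) 1) →
        (∀ t ∈ Icc (0 : ℝ) 1, HarmonicOnSet (fun z => Φ z t) unitDisc) →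
        (∀ s ∈ Icc (0 : ℝ) 1, ∀ t ∈ Icc (0 : ℝ) 1, s ≤ t →
          ∀ z ∈ unitDisc, Φ z s ≤ Φ z t) →
        (∀ t ∈ Icc (0 : ℝ) 1, Φ z₀ t = t) →
        ∀ s ∈ Icc (0 : ℝ) 1, ∀ t ∈ Icc (0 : ℝ) 1, |Φ z₁ t - Φ z₁ s| ≤ C * |t - s| := by
  intro z₀ hz₀ z₁ hz₁
  obtain ⟨C, hC, harnack⟩ := exists_harnack_constant hz₀ hz₁
  refine ⟨C, hC, fun Φ _ hharm hmono hnorm s hs t ht => ?_⟩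
  wlog hst : s ≤ t generalizing s t
  · rw [abs_sub_comm, abs_sub_comm t]
    exact this t ht s hs (le_of_not_ge hst)
  have hdiff := harnack (fun z => Φ z t - Φ z s)
    ((hharm t ht).harmonicOnNhd.sub (hharm s hs).harmonicOnNhd)
    fun z hz => sub_nonneg.2 (hmono s hs t ht hst z hz)
  rw [abs_of_nonneg (sub_nonneg.2 (hmono s hs t ht hst z₁ hz₁)),
    abs_of_nonneg (sub_nonneg.2 hst)]
  simpa only [hnorm t ht, hnorm s hs] using hdiff
end
end

section
/- (Lemma 6.1 for bundles over compact hyperbolic surfaces: normalization, range, and affine classification of leafwise harmonic functions.) Let Γ be a cocompact Fuchsian group acting on [0,1] by homeomorphisms fixing 0 and 1, with no point x ∈ (0,1) having a finite Γ-orbit. Suppose there exists a Γ-invariant leafwise harmonic function g̃₀ : 𝔻 × [0,1] → ℝ that is non-trivial, i.e., for some x the function z ↦ g̃₀(z,x) is nonconstant. Then: (a) there exists a unique Γ-invariant leafwise harmonic function f̃ : 𝔻 × [0,1] → ℝ with f̃(z,0) = 0 and f̃(z,1) = 1 for all z ∈ 𝔻; (b) this f̃ satisfies 0 < f̃(z,x)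 < 1 for all z ∈ 𝔻 and all x ∈ (0,1); (c) every Γ-invariant leafwise harmonic function g̃ : 𝔻 × [0,1] → ℝ is of the form g̃ = a·f̃ + b for some constants a, b ∈ ℝ. -/
/-!
By cocompactness, a `Γ`-invariant leafwise harmonic function `f` attains its maximum on
`𝔻 × [0,1]`, and by the maximum principle the fiber through a maximum point is flat. The flat
fibers at a given level form a closed `Γ`-invariant subset of `[0,1]`; as `Γ` acts by increasing
homeomorphisms, the extreme points of this set are global fixed points, hence `0` or `1`. So `f`
lies between its values on the two boundary fibers, which are constant, and is therefore
determined by them. Normalizing the non-trivial `g₀` gives `f`; uniqueness and the affine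
classification follow, and the same flat-fiber argument keeps `f` away from `0` and `1` over
interior points.
-/

open Metric Set Filter

noncomputable section

/-- `ρ` is a cocompact Fuchsian group action of `Γ` on the open unit disc: a faithful,
properly discontinuous, cocompact action by Möbius transformations
`z ↦ (αz+β)/(β̄z+ᾱ)` with `|α|² - |β|² = 1`. -/
structure IsCocompactFuchsian (Γ : Type*) [Group Γ] (ρ : Γ → ℂ → ℂ) : Prop where
  one_act : ∀ z ∈ unitDisc, ρ 1 z = z
  mul_act : ∀ γ₁ γ₂ : Γ, ∀ z ∈ unitDisc, ρ (γ₁ * γ₂) z = ρ γ₁ (ρ γ₂ z)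
  maps_disc : ∀ γ : Γ, ∀ z ∈ unitDisc, ρ γ z ∈ unitDisc
  moebius : ∀ γ : Γ, ∃ α β : ℂ, ‖α‖ ^ 2 - ‖β‖ ^ 2 = 1 ∧
    ∀ z ∈ unitDisc, ρ γ z = (α * z + β) / ((starRingEnd ℂ) β * z + (starRingEnd ℂ) α)
  faithful : ∀ γ : Γ, (∀ z ∈ unitDisc, ρ γ z = z) → γ = 1
  properly_discontinuous : ∀ K : Set ℂ, K ⊆ unitDisc → IsCompact K →
    {γ : Γ | ((ρ γ '' K) ∩ K).Nonempty}.Finite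
  cocompact : ∃ K : Set ℂ, K ⊆ unitDisc ∧ IsCompact K ∧ ∀ z ∈ unitDisc, ∃ γ : Γ, ρ γ z ∈ K

/-- `σ` is an action of the group `Γ` on the topological space `X` by homeomorphisms. -/
structure IsActionByHomeomorphisms (Γ : Type*) [Group Γ] (X : Type*) [TopologicalSpace X]
    (σ : Γ → X → X) : Prop where
  one_act : ∀ x : X, σ 1 x = x
  mul_act : ∀ γ₁ γ₂ : Γ, ∀ x : X, σ (γ₁ * γ₂) x = σ γ₁ (σ γ₂ x)
  continuous_act : ∀ γ : Γ, Continuous (σ γ)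

/-- `f` is a `Γ`-invariant leafwise harmonic function on `𝔻 × [0,1]`. -/
def IsInvariantLeafwiseHarmonicI {Γ : Type*} [Group Γ] (ρ : Γ → ℂ → ℂ)
    (σ : Γ → unitInterval → unitInterval) (f : ℂ → unitInterval → ℝ) : Prop :=
  ContinuousOn (fun p : ℂ × unitInterval => f p.1 p.2)
      (unitDisc ×ˢ (univ : Set unitInterval)) ∧
  (∀ x : unitInterval, HarmonicOnSet (fun z => f z x) unitDisc) ∧
  (∀ γ : Γ, ∀ z ∈ unitDisc, ∀ x : unitInterval, f (ρ γ z) (σ γ x) = f z x)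


open Topology

section Harmonic

variable {h h₁ h₂ : ℂ → ℝ} {U : Set ℂ}

theorem HarmonicOnSet.continuousOn (hh : HarmonicOnSet h U) : ContinuousOn h U := by
  intro z hz
  obtain ⟨r, hr, -, g, hg, hgh⟩ := hh z hz
  have hball : ball z r ∈ 𝓝 z := ball_mem_nhds z hr
  exact ((Complex.continuous_re.continuousAt.comp (hg.continuousOn.continuousAt hball)).congr
    (eventuallyEq_of_mem hball fun w hw => (hgh w hw).symm)).continuousWithinAt

theorem HarmonicOnSet.const_mul_add_const (hh : HarmonicOnSet h U) (a b : ℝ) :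
    HarmonicOnSet (fun z => a * h z + b) U := by
  intro z hz
  obtain ⟨r, hr, hrU, g, hg, hgh⟩ := hh z hz
  refine ⟨r, hr, hrU, fun w => a * g w + b, (hg.const_mul _).add_const _, fun w hw => ?_⟩
  simp [hgh w hw]

theorem HarmonicOnSet.sub (hh₁ : HarmonicOnSet h₁ U) (hh₂ : HarmonicOnSet h₂ U) :
    HarmonicOnSet (fun z => h₁ z - h₂ z) U := by
  intro z hz
  obtain ⟨r₁, hr₁, hr₁U, g₁, hg₁, hgh₁⟩ := hh₁ z hz
  obtain ⟨r₂, hr₂, -, g₂, hg₂, hgh₂⟩ := hh₂ z hz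
  have h₁ : ball z (min r₁ r₂) ⊆ ball z r₁ := ball_subset_ball (min_le_left _ _)
  have h₂ : ball z (min r₁ r₂) ⊆ ball z r₂ := ball_subset_ball (min_le_right _ _)
  refine ⟨min r₁ r₂, lt_min hr₁ hr₂, h₁.trans hr₁U, fun w => g₁ w - g₂ w,
    (hg₁.mono h₁).sub (hg₂.mono h₂), fun w hw => ?_⟩
  simp [hgh₁ w (h₁ hw), hgh₂ w (h₂ hw)]

/-- `exp ∘ g` is holomorphic with modulus `exp ∘ h`, so the maximum modulus principle applies. -/
theorem HarmonicOnSet.eventually_eq_of_isLocalMax (hh : HarmonicOnSet h U) {z : ℂ}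
    (hz : z ∈ U) (hmax : IsLocalMax h z) : ∀ᶠ w in 𝓝 z, h w = h z := by
  obtain ⟨r, hr, -, g, hg, hgh⟩ := hh z hz
  have hball : ball z r ∈ 𝓝 z := ball_mem_nhds z hr
  have hnorm : (fun w => Real.exp (h w)) =ᶠ[𝓝 z] norm ∘ fun w => Complex.exp (g w) :=
    eventually_of_mem hball fun w hw => by simp [Complex.norm_exp, hgh w hw]
  have hexp : ∀ᶠ w in 𝓝 z, Complex.exp (g w) = Complex.exp (g z) :=
    Complex.eventually_eq_of_isLocalMax_norm
      (eventually_of_mem hball fun w hw => (hg.differentiableAt (isOpen_ball.mem_nhds hw)).cexp)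
      ((hmax.comp_mono Real.exp_monotone).congr hnorm)
  filter_upwards [hexp, hnorm] with w hw hnw
  exact Real.exp_injective (by simp only [hnw, Function.comp_apply, hw, hnorm.self_of_nhds])

theorem HarmonicOnSet.eqOn_of_isMaxOn (hh : HarmonicOnSet h U) (hU : IsPreconnected U)
    (hUo : IsOpen U) {z₀ : ℂ} (hz₀ : z₀ ∈ U) (hmax : IsMaxOn h U z₀) :
    EqOn h (fun _ => h z₀) U := by
  have hloc : ∀ z ∈ U, h z = h z₀ → ∀ᶠ w in 𝓝 z, h w = h z₀ := fun z hz hzv => by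
    have := hh.eventually_eq_of_isLocalMax hz
      (eventually_of_mem (hUo.mem_nhds hz) fun w hw => hzv ▸ hmax hw)
    rwa [hzv] at this
  have hsub : U ⊆ {z | ∀ᶠ w in 𝓝 z, h w = h z₀} := by
    refine hU.subset_of_closure_inter_subset isOpen_setOfPred_eventually_nhds
      ⟨z₀, hz₀, hloc z₀ hz₀ rfl⟩ ?_
    rintro z ⟨hzS, hz⟩
    refine hloc z hz (tendsto_nhds_unique_of_frequently_eq
      ((hh.continuousOn z hz).continuousAt (hUo.mem_nhds hz)) tendsto_const_nhds ?_)
    exact (mem_closure_iff_frequently.1 hzS).mp (Eventually.of_forall fun w hw => hw.self_of_nhds)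
  exact fun z hz => (hsub hz).self_of_nhds

theorem HarmonicOnSet.eqOn_of_isMinOn (hh : HarmonicOnSet h U) (hU : IsPreconnected U)
    (hUo : IsOpen U) {z₀ : ℂ} (hz₀ : z₀ ∈ U) (hmin : IsMinOn h U z₀) :
    EqOn h (fun _ => h z₀) U := fun z hz => by
  simpa using (hh.const_mul_add_const (-1) 0).eqOn_of_isMaxOn hU hUo hz₀
    (fun w hw => by simpa using hmin hw) hz

end Harmonic

theorem exists_isMaxOn_of_invariant {X Γ : Type*} [TopologicalSpace X] {τ : Γ → X → X}
    {D K : Set X} {f : X → ℝ} (hKD : K ⊆ D) (hK : IsCompact K)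
    (hcover : ∀ x ∈ D, ∃ γ, τ γ x ∈ K) (hD : D.Nonempty) (hf : ContinuousOn f D)
    (hinv : ∀ γ, ∀ x ∈ D, f (τ γ x) = f x) : ∃ p ∈ D, IsMaxOn f D p := by
  obtain ⟨x, hx⟩ := hD
  obtain ⟨γ, hγ⟩ := hcover x hx
  obtain ⟨p, hpK, hp⟩ := hK.exists_isMaxOn ⟨_, hγ⟩ (hf.mono hKD)
  refine ⟨p, hKD hpK, fun y hy => ?_⟩
  obtain ⟨δ, hδ⟩ := hcover y hy
  rw [mem_ofPred_eq, ← hinv δ y hy]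
  exact hp hδ

section IntervalAction

variable {Γ X : Type*} [Group Γ] [TopologicalSpace X] {σ : Γ → X → X}

theorem IsActionByHomeomorphisms.apply_apply_inv (hσ : IsActionByHomeomorphisms Γ X σ) (γ : Γ)
    (x : X) : σ γ (σ γ⁻¹ x) = x := by
  rw [← hσ.mul_act, mul_inv_cancel, hσ.one_act]

theorem IsActionByHomeomorphisms.monotone [ConditionallyCompleteLinearOrder X] [OrderTopology X]
    [DenselyOrdered X] [BoundedOrder X] (hσ : IsActionByHomeomorphisms Γ X σ)
    (hbot : ∀ γ, σ γ ⊥ = ⊥) (γ : Γ) : Monotone (σ γ) := by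
  refine ((hσ.continuous_act γ).strictMono_of_inj_boundedOrder (by simp [hbot]) ?_).monotone
  exact Function.LeftInverse.injective (g := σ γ⁻¹) fun x => by
    simpa using hσ.apply_apply_inv γ⁻¹ x

theorem IsLeast.apply_eq_of_mapsTo [PartialOrder X] (hσ : IsActionByHomeomorphisms Γ X σ)
    (hmono : ∀ γ, Monotone (σ γ)) {A : Set X} (hA : ∀ γ, MapsTo (σ γ) A A) {a : X}
    (ha : IsLeast A a) (γ : Γ) : σ γ a = a :=
  le_antisymm (by simpa only [hσ.apply_apply_inv] using hmono γ (ha.2 (hA γ⁻¹ ha.1)))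
    (ha.2 (hA γ ha.1))

theorem IsGreatest.apply_eq_of_mapsTo [PartialOrder X] (hσ : IsActionByHomeomorphisms Γ X σ)
    (hmono : ∀ γ, Monotone (σ γ)) {A : Set X} (hA : ∀ γ, MapsTo (σ γ) A A) {a : X}
    (ha : IsGreatest A a) (γ : Γ) : σ γ a = a :=
  le_antisymm (ha.2 (hA γ ha.1))
    (by simpa only [hσ.apply_apply_inv] using hmono γ (ha.2 (hA γ⁻¹ ha.1)))

end IntervalAction

section UnitInterval

theorem eq_zero_or_eq_one_of_forall_apply_eq {Γ : Type*} {σ : Γ → unitInterval → unitInterval}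
    (hnofinite : ∀ x : unitInterval, 0 < (x : ℝ) → (x : ℝ) < 1 →
      (Set.range fun γ : Γ => σ γ x).Infinite)
    {x : unitInterval} (hx : ∀ γ, σ γ x = x) : x = 0 ∨ x = 1 := by
  by_contra! h
  exact hnofinite x (unitInterval.pos_iff_ne_zero.2 h.1) (unitInterval.lt_one_iff_ne_one.2 h.2)
    ((finite_singleton x).subset (range_subset_iff.2 hx))

variable {Γ : Type*} [Group Γ] {σ : Γ → unitInterval → unitInterval}

theorem zero_mem_of_isClosed_of_mapsTo (hσ : IsActionByHomeomorphisms Γ unitInterval σ)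
    (hfix0 : ∀ γ : Γ, σ γ 0 = 0)
    (hfixed : ∀ x, (∀ γ, σ γ x = x) → x = 0 ∨ x = 1)
    {A : Set unitInterval} (hAc : IsClosed A) (hA : ∀ γ, MapsTo (σ γ) A A)
    {x : unitInterval} (hx : x ∈ A) (hx1 : (x : ℝ) < 1) : (0 : unitInterval) ∈ A := by
  obtain ⟨a, ha⟩ := hAc.isCompact.exists_isLeast ⟨x, hx⟩
  rcases hfixed a (ha.apply_eq_of_mapsTo hσ (hσ.monotone hfix0) hA) with rfl | rfl
  · exact ha.1
  · exact absurd (ha.2 hx) (not_le.2 hx1)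

theorem one_mem_of_isClosed_of_mapsTo (hσ : IsActionByHomeomorphisms Γ unitInterval σ)
    (hfix0 : ∀ γ : Γ, σ γ 0 = 0)
    (hfixed : ∀ x, (∀ γ, σ γ x = x) → x = 0 ∨ x = 1)
    {A : Set unitInterval} (hAc : IsClosed A) (hA : ∀ γ, MapsTo (σ γ) A A)
    {x : unitInterval} (hx : x ∈ A) (hx0 : 0 < (x : ℝ)) : (1 : unitInterval) ∈ A := by
  obtain ⟨a, ha⟩ := hAc.isCompact.exists_isGreatest ⟨x, hx⟩
  rcases hfixed a (ha.apply_eq_of_mapsTo hσ (hσ.monotone hfix0) hA) with rfl | rfl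
  · exact absurd (ha.2 hx) (not_le.2 hx0)
  · exact ha.1

end UnitInterval

theorem isOpen_unitDisc : IsOpen unitDisc := isOpen_ball

theorem isPreconnected_unitDisc : IsPreconnected unitDisc :=
  (convex_ball (0 : ℂ) 1).isPreconnected

theorem zero_mem_unitDisc : (0 : ℂ) ∈ unitDisc := by
  simp [unitDisc]

theorem IsCocompactFuchsian.apply_apply_inv {Γ : Type*} [Group Γ] {ρ : Γ → ℂ → ℂ}
    (hΓ : IsCocompactFuchsian Γ ρ) (γ : Γ) {z : ℂ} (hz : z ∈ unitDisc) :
    ρ γ (ρ γ⁻¹ z) = z := by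
  rw [← hΓ.mul_act γ γ⁻¹ z hz, mul_inv_cancel, hΓ.one_act z hz]

def flatFibers (f : ℂ → unitInterval → ℝ) (c : ℝ) : Set unitInterval :=
  {x | ∀ z ∈ unitDisc, f z x = c}

namespace IsInvariantLeafwiseHarmonicI

variable {Γ : Type*} [Group Γ] {ρ : Γ → ℂ → ℂ} {σ : Γ → unitInterval → unitInterval}
  {f g : ℂ → unitInterval → ℝ}

theorem const_mul_add_const (hf : IsInvariantLeafwiseHarmonicI ρ σ f) (a b : ℝ) :
    IsInvariantLeafwiseHarmonicI ρ σ (fun z x => a * f z x + b) :=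
  ⟨(continuous_add_const b).comp_continuousOn (hf.1.const_smul a),
    fun x => (hf.2.1 x).const_mul_add_const a b,
    fun γ z hz x => by simp only [hf.2.2 γ z hz x]⟩

theorem sub (hf : IsInvariantLeafwiseHarmonicI ρ σ f) (hg : IsInvariantLeafwiseHarmonicI ρ σ g) :
    IsInvariantLeafwiseHarmonicI ρ σ (fun z x => f z x - g z x) :=
  ⟨hf.1.sub hg.1, fun x => (hf.2.1 x).sub (hg.2.1 x),
    fun γ z hz x => by simp only [hf.2.2 γ z hz x, hg.2.2 γ z hz x]⟩

theorem continuous_apply (hf : IsInvariantLeafwiseHarmonicI ρ σ f) {z : ℂ}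
    (hz : z ∈ unitDisc) : Continuous (f z) :=
  continuous_iff_continuousAt.2 fun x =>
    ((hf.1.continuousAt ((isOpen_unitDisc.prod isOpen_univ).mem_nhds ⟨hz, mem_univ x⟩)).comp
      (continuous_const.prodMk continuous_id).continuousAt :)

theorem isClosed_flatFibers (hf : IsInvariantLeafwiseHarmonicI ρ σ f) (c : ℝ) :
    IsClosed (flatFibers f c) := by
  simp only [flatFibers, ofPred_forall]
  exact isClosed_iInter fun z => isClosed_iInter fun hz =>
    isClosed_eq (hf.continuous_apply hz) continuous_const

theorem mapsTo_flatFibers (hΓ : IsCocompactFuchsian Γ ρ) (hf : IsInvariantLeafwiseHarmonicI ρ σ f)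
    (c : ℝ) (γ : Γ) : MapsTo (σ γ) (flatFibers f c) (flatFibers f c) := fun x hx z hz => by
  have hz' := hΓ.maps_disc γ⁻¹ z hz
  rw [← hΓ.apply_apply_inv γ hz, hf.2.2 γ _ hz' x, hx _ hz']

theorem mem_flatFibers_of_isMaxOn (hf : IsInvariantLeafwiseHarmonicI ρ σ f) {x : unitInterval}
    {z₀ : ℂ} (hz₀ : z₀ ∈ unitDisc) (hmax : IsMaxOn (f · x) unitDisc z₀) :
    x ∈ flatFibers f (f z₀ x) :=
  fun _ hz => (hf.2.1 x).eqOn_of_isMaxOn isPreconnected_unitDisc isOpen_unitDisc hz₀ hmax hz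

theorem mem_flatFibers_of_isMinOn (hf : IsInvariantLeafwiseHarmonicI ρ σ f) {x : unitInterval}
    {z₀ : ℂ} (hz₀ : z₀ ∈ unitDisc) (hmin : IsMinOn (f · x) unitDisc z₀) :
    x ∈ flatFibers f (f z₀ x) :=
  fun _ hz => (hf.2.1 x).eqOn_of_isMinOn isPreconnected_unitDisc isOpen_unitDisc hz₀ hmin hz

/-- Over a global fixed point, `f` descends to a harmonic function on the compact surface. -/
theorem apply_eq_of_forall_apply_eq (hΓ : IsCocompactFuchsian Γ ρ)
    (hf : IsInvariantLeafwiseHarmonicI ρ σ f) {x : unitInterval} (hx : ∀ γ, σ γ x = x)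
    {z : ℂ} (hz : z ∈ unitDisc) : f z x = f 0 x := by
  obtain ⟨K, hKD, hK, hcover⟩ := hΓ.cocompact
  obtain ⟨z₁, hz₁, hmax⟩ := exists_isMaxOn_of_invariant hKD hK hcover ⟨0, zero_mem_unitDisc⟩
    (hf.2.1 x).continuousOn fun γ z hz => by simpa only [hx γ] using hf.2.2 γ z hz x
  rw [hf.mem_flatFibers_of_isMaxOn hz₁ hmax z hz,
    hf.mem_flatFibers_of_isMaxOn hz₁ hmax 0 zero_mem_unitDisc]

theorem le_max_apply_zero_apply_one (hΓ : IsCocompactFuchsian Γ ρ)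
    (hσ : IsActionByHomeomorphisms Γ unitInterval σ) (hfix0 : ∀ γ : Γ, σ γ 0 = 0)
    (hfixed : ∀ x, (∀ γ, σ γ x = x) → x = 0 ∨ x = 1)
    (hf : IsInvariantLeafwiseHarmonicI ρ σ f) {z : ℂ}
    (hz : z ∈ unitDisc) (x : unitInterval) : f z x ≤ max (f 0 0) (f 0 1) := by
  obtain ⟨K, hKD, hK, hcover⟩ := hΓ.cocompact
  obtain ⟨⟨z₁, x₁⟩, ⟨hz₁, -⟩, hmax⟩ :=
    exists_isMaxOn_of_invariant (τ := fun γ p => (ρ γ p.1, σ γ p.2))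
      (prod_mono hKD subset_rfl) (hK.prod isCompact_univ)
      (fun p hp => (hcover p.1 hp.1).imp fun γ hγ => ⟨hγ, mem_univ _⟩)
      ⟨(0, 0), zero_mem_unitDisc, mem_univ _⟩ hf.1 fun γ p hp => hf.2.2 γ p.1 hp.1 p.2
  have hflat : x₁ ∈ flatFibers f (f z₁ x₁) :=
    hf.mem_flatFibers_of_isMaxOn hz₁ fun w hw => hmax (mk_mem_prod hw (mem_univ x₁))
  have hboundary : f 0 0 = f z₁ x₁ ∨ f 0 1 = f z₁ x₁ := by
    rcases x₁.2.2.lt_or_eq with hx₁ | hx₁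
    · exact .inl <| zero_mem_of_isClosed_of_mapsTo hσ hfix0 hfixed (hf.isClosed_flatFibers _)
        (hf.mapsTo_flatFibers hΓ _) hflat hx₁ 0 zero_mem_unitDisc
    · exact .inr <| (Subtype.ext hx₁ : x₁ = 1) ▸ hflat 0 zero_mem_unitDisc
  calc f z x ≤ f z₁ x₁ := hmax (mk_mem_prod hz (mem_univ x))
    _ ≤ max (f 0 0) (f 0 1) := by
      rcases hboundary with h | h <;> rw [← h] <;> simp

theorem min_apply_zero_apply_one_le (hΓ : IsCocompactFuchsian Γ ρ)
    (hσ : IsActionByHomeomorphisms Γ unitInterval σ) (hfix0 : ∀ γ : Γ, σ γ 0 = 0)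
    (hfixed : ∀ x, (∀ γ, σ γ x = x) → x = 0 ∨ x = 1)
    (hf : IsInvariantLeafwiseHarmonicI ρ σ f) {z : ℂ}
    (hz : z ∈ unitDisc) (x : unitInterval) : min (f 0 0) (f 0 1) ≤ f z x := by
  have := (hf.const_mul_add_const (-1) 0).le_max_apply_zero_apply_one hΓ hσ hfix0 hfixed hz x
  simp only [neg_one_mul, add_zero, max_neg_neg] at this
  exact neg_le_neg_iff.1 this

theorem eq_of_apply_zero_eq_of_apply_one_eq (hΓ : IsCocompactFuchsian Γ ρ)
    (hσ : IsActionByHomeomorphisms Γ unitInterval σ) (hfix0 : ∀ γ : Γ, σ γ 0 = 0)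
    (hfixed : ∀ x, (∀ γ, σ γ x = x) → x = 0 ∨ x = 1)
    (hf : IsInvariantLeafwiseHarmonicI ρ σ f) (hg : IsInvariantLeafwiseHarmonicI ρ σ g)
    (h0 : f 0 0 = g 0 0) (h1 : f 0 1 = g 0 1) {z : ℂ} (hz : z ∈ unitDisc) (x : unitInterval) :
    f z x = g z x := by
  have hle := (hf.sub hg).le_max_apply_zero_apply_one hΓ hσ hfix0 hfixed hz x
  have hge := (hf.sub hg).min_apply_zero_apply_one_le hΓ hσ hfix0 hfixed hz x
  simp only [h0, h1, sub_self, max_self, min_self] at hle hge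
  linarith

theorem apply_lt_apply_zero_one (hΓ : IsCocompactFuchsian Γ ρ)
    (hσ : IsActionByHomeomorphisms Γ unitInterval σ) (hfix0 : ∀ γ : Γ, σ γ 0 = 0)
    (hfixed : ∀ x, (∀ γ, σ γ x = x) → x = 0 ∨ x = 1)
    (hf : IsInvariantLeafwiseHarmonicI ρ σ f) (hlt : f 0 0 < f 0 1) {z : ℂ}
    (hz : z ∈ unitDisc) {x : unitInterval} (hx : (x : ℝ) < 1) : f z x < f 0 1 := by
  have hle : ∀ w ∈ unitDisc, f w x ≤ f 0 1 := fun w hw =>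
    (hf.le_max_apply_zero_apply_one hΓ hσ hfix0 hfixed hw x).trans_eq (max_eq_right hlt.le)
  refine (hle z hz).lt_of_ne fun heq => hlt.ne ?_
  have hflat : x ∈ flatFibers f (f z x) :=
    hf.mem_flatFibers_of_isMaxOn hz fun w hw => (hle w hw).trans_eq heq.symm
  rw [zero_mem_of_isClosed_of_mapsTo hσ hfix0 hfixed (hf.isClosed_flatFibers _)
    (hf.mapsTo_flatFibers hΓ _) hflat hx 0 zero_mem_unitDisc, heq]

theorem apply_zero_zero_lt_apply (hΓ : IsCocompactFuchsian Γ ρ)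
    (hσ : IsActionByHomeomorphisms Γ unitInterval σ) (hfix0 : ∀ γ : Γ, σ γ 0 = 0)
    (hfixed : ∀ x, (∀ γ, σ γ x = x) → x = 0 ∨ x = 1)
    (hf : IsInvariantLeafwiseHarmonicI ρ σ f) (hlt : f 0 0 < f 0 1) {z : ℂ}
    (hz : z ∈ unitDisc) {x : unitInterval} (hx : 0 < (x : ℝ)) : f 0 0 < f z x := by
  have hge : ∀ w ∈ unitDisc, f 0 0 ≤ f w x := fun w hw =>
    (min_eq_left hlt.le).symm.trans_le (hf.min_apply_zero_apply_one_le hΓ hσ hfix0 hfixed hw x)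
  refine (hge z hz).lt_of_ne' fun heq => hlt.ne' ?_
  have hflat : x ∈ flatFibers f (f z x) :=
    hf.mem_flatFibers_of_isMinOn hz fun w hw => heq.trans_le (hge w hw)
  rw [one_mem_of_isClosed_of_mapsTo hσ hfix0 hfixed (hf.isClosed_flatFibers _)
    (hf.mapsTo_flatFibers hΓ _) hflat hx 0 zero_mem_unitDisc, heq]

end IsInvariantLeafwiseHarmonicI

/-- **Lemma 6.1 (normalization, range and affine classification).** Suppose a cocompact
Fuchsian group `Γ` acts on `[0,1]` by homeomorphisms fixing `0` and `1` with no finite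
interior orbit, and some non-trivial `Γ`-invariant leafwise harmonic function exists. Then:
(a) there is a unique (on `𝔻 × [0,1]`) `Γ`-invariant leafwise harmonic `f` with boundary
values `0` and `1`; (b) `0 < f(z,x) < 1` for interior `x`; (c) every `Γ`-invariant
leafwise harmonic function is of the form `a·f + b`. -/
theorem normalized_harmonic_function_exists_unique
    {Γ : Type*} [Group Γ] (ρ : Γ → ℂ → ℂ) (hΓ : IsCocompactFuchsian Γ ρ)
    (σ : Γ → unitInterval → unitInterval) (hσ : IsActionByHomeomorphisms Γ unitInterval σ)
    (hfix0 : ∀ γ : Γ, σ γ 0 = 0) (hfix1 : ∀ γ : Γ, σ γ 1 = 1)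
    (hnofinite : ∀ x : unitInterval, 0 < (x : ℝ) → (x : ℝ) < 1 →
      (Set.range fun γ : Γ => σ γ x).Infinite)
    (g₀ : ℂ → unitInterval → ℝ) (hg₀ : IsInvariantLeafwiseHarmonicI ρ σ g₀)
    (hg₀nontrivial : ∃ x : unitInterval, ∃ z ∈ unitDisc, ∃ z' ∈ unitDisc,
      g₀ z x ≠ g₀ z' x) :
    ∃ f : ℂ → unitInterval → ℝ,
      -- (a) existence and boundary normalization …
      (IsInvariantLeafwiseHarmonicI ρ σ f ∧
        (∀ z ∈ unitDisc, f z 0 = 0) ∧ (∀ z ∈ unitDisc, f z 1 = 1)) ∧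
      -- … and uniqueness
      (∀ f' : ℂ → unitInterval → ℝ, IsInvariantLeafwiseHarmonicI ρ σ f' →
        (∀ z ∈ unitDisc, f' z 0 = 0) → (∀ z ∈ unitDisc, f' z 1 = 1) →
        ∀ z ∈ unitDisc, ∀ x : unitInterval, f' z x = f z x) ∧
      -- (b) the range on interior fibers is (0,1)
      (∀ z ∈ unitDisc, ∀ x : unitInterval, 0 < (x : ℝ) → (x : ℝ) < 1 →
        0 < f z x ∧ f z x < 1) ∧
      -- (c) affine classification
      (∀ g : ℂ → unitInterval → ℝ, IsInvariantLeafwiseHarmonicI ρ σ g →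
        ∃ a b : ℝ, ∀ z ∈ unitDisc, ∀ x : unitInterval, g z x = a * f z x + b) := by
  have hfixed : ∀ x, (∀ γ, σ γ x = x) → x = 0 ∨ x = 1 :=
    fun _ => eq_zero_or_eq_one_of_forall_apply_eq hnofinite
  have hne : g₀ 0 0 ≠ g₀ 0 1 := by
    obtain ⟨x, z, hz, z', hz', hzz'⟩ := hg₀nontrivial
    intro h01
    have hconst : ∀ w ∈ unitDisc, g₀ w x = g₀ 0 0 := fun w hw => by
      simpa using hg₀.eq_of_apply_zero_eq_of_apply_one_eq hΓ hσ hfix0 hfixed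
        (hg₀.const_mul_add_const 0 (g₀ 0 0)) (by simp) (by simp [h01]) hw x
    exact hzz' ((hconst z hz).trans (hconst z' hz').symm)
  set f : ℂ → unitInterval → ℝ :=
    fun z x => (g₀ 0 1 - g₀ 0 0)⁻¹ * g₀ z x + -(g₀ 0 1 - g₀ 0 0)⁻¹ * g₀ 0 0 with hf_def
  have hf : IsInvariantLeafwiseHarmonicI ρ σ f := hg₀.const_mul_add_const _ _
  have hf0 : f 0 0 = 0 := by simp only [hf_def]; ring
  have hf1 : f 0 1 = 1 := by
    simp only [hf_def]
    field_simp [sub_ne_zero.2 hne.symm]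
    ring
  have hf01 : f 0 0 < f 0 1 := by rw [hf0, hf1]; exact one_pos
  refine ⟨f, ⟨hf, fun z hz => ?_, fun z hz => ?_⟩, fun f' hf' h0 h1 z hz x => ?_,
    fun z hz x hx0 hx1 => ?_, fun g hg => ⟨g 0 1 - g 0 0, g 0 0, fun z hz x => ?_⟩⟩
  · rw [hf.apply_eq_of_forall_apply_eq hΓ hfix0 hz, hf0]
  · rw [hf.apply_eq_of_forall_apply_eq hΓ hfix1 hz, hf1]
  · exact hf'.eq_of_apply_zero_eq_of_apply_one_eq hΓ hσ hfix0 hfixed hf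
      (by rw [h0 0 zero_mem_unitDisc, hf0]) (by rw [h1 0 zero_mem_unitDisc, hf1]) hz x
  · exact ⟨hf0 ▸ hf.apply_zero_zero_lt_apply hΓ hσ hfix0 hfixed hf01 hz hx0,
      hf1 ▸ hf.apply_lt_apply_zero_one hΓ hσ hfix0 hfixed hf01 hz hx1⟩
  · exact hg.eq_of_apply_zero_eq_of_apply_one_eq hΓ hσ hfix0 hfixed (hf.const_mul_add_const _ _)
      (by simp [hf0]) (by simp [hf1]) hz x
end
end
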